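/- Fix c ∈ ℝ and work on W = {(x₁,y₁,x₂,y₂) ∈ ℝ⁴ : x₁ ≠ 0, x₂ ≠ 0} with the two-site canonical Poisson bracket {f,g} = Σ_{s=1,2} (∂f/∂x_s ∂g/∂y_s − ∂f/∂y_s ∂g/∂x_s). Let h₁(x,y) = x²/2, h₂(x,y) = −xy/2, h₃(x,y) = (1/2)(y² + c/x²), and set h_i^{(2)} = h_i(x₁,y₁) + h_i(x₂,y₂). Then the function F^{(2)} := h₁^{(2)} h₃^{(2)} − (h₂^{(2)})² equals (1/4)(x₁y₂ − x₂y₁)² + (c/4)·(x₁²+x₂²)²/(x₁²x₂²), and {F^{(2)}, h_i^{(2)}} = 0 for i = 1,2,3. -/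

import Mathlib

/-- Two-site canonical Poisson bracket on ℝ⁴ with coordinates `(x₁,y₁,x₂,y₂)`:
`{f,g} = Σ_{s=1,2} (∂f/∂x_s ∂g/∂y_s − ∂f/∂y_s ∂g/∂x_s)`. -/
noncomputable def pb4 (f g : ℝ × ℝ × ℝ × ℝ → ℝ) (p : ℝ × ℝ × ℝ × ℝ) : ℝ :=
  fderiv ℝ f p (1, 0, 0, 0) * fderiv ℝ g p (0, 1, 0, 0)
    - fderiv ℝ f p (0, 1, 0, 0) * fderiv ℝ g p (1, 0, 0, 0)
    + fderiv ℝ f p (0, 0, 1, 0) * fderiv ℝ g p (0, 0, 0, 1)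
    - fderiv ℝ f p (0, 0, 0, 1) * fderiv ℝ g p (0, 0, 1, 0)

/-- `h₁^{(2)} = x₁²/2 + x₂²/2`, coproduct of the Milne–Pinney Hamiltonian `h₁ = x²/2`. -/
noncomputable def K1 (p : ℝ × ℝ × ℝ × ℝ) : ℝ := p.1 ^ 2 / 2 + p.2.2.1 ^ 2 / 2

/-- `h₂^{(2)} = −x₁y₁/2 − x₂y₂/2`, coproduct of `h₂ = −xy/2`. -/
noncomputable def K2 (p : ℝ × ℝ × ℝ × ℝ) : ℝ := -(p.1 * p.2.1) / 2 + -(p.2.2.1 * p.2.2.2) / 2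

/-- `h₃^{(2)}`, coproduct of `h₃ = (y² + c/x²)/2`. -/
noncomputable def K3 (c : ℝ) (p : ℝ × ℝ × ℝ × ℝ) : ℝ :=
  (1 / 2) * (p.2.1 ^ 2 + c / p.1 ^ 2) + (1 / 2) * (p.2.2.2 ^ 2 + c / p.2.2.1 ^ 2)

/-- The Ray–Reid invariant `F^{(2)} = h₁^{(2)} h₃^{(2)} − (h₂^{(2)})²`. -/
noncomputable def F5 (c : ℝ) (p : ℝ × ℝ × ℝ × ℝ) : ℝ := K1 p * K3 c p - (K2 p) ^ 2

set_option maxHeartbeats 2000000 in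
open ContinuousLinearMap in
/-- The Ray–Reid invariant of the Milne–Pinney system equals
`(1/4)(x₁y₂ − x₂y₁)² + (c/4)(x₁²+x₂²)²/(x₁²x₂²)` and Poisson-commutes with the three
coproduct Hamiltonians on `{x₁ ≠ 0, x₂ ≠ 0}`. -/
theorem rayReid_invariant (c : ℝ) :
    ∀ p : ℝ × ℝ × ℝ × ℝ, p.1 ≠ 0 → p.2.2.1 ≠ 0 →
      F5 c p = (1 / 4) * (p.1 * p.2.2.2 - p.2.2.1 * p.2.1) ^ 2
          + (c / 4) * (p.1 ^ 2 + p.2.2.1 ^ 2) ^ 2 / (p.1 ^ 2 * p.2.2.1 ^ 2) ∧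
      pb4 (F5 c) K1 p = 0 ∧ pb4 (F5 c) K2 p = 0 ∧ pb4 (F5 c) (K3 c) p = 0 := by

  intro p h1 h3
  have hX1 : HasFDerivAt (fun p : ℝ×ℝ×ℝ×ℝ => p.1) (fst ℝ ℝ (ℝ×ℝ×ℝ)) p := hasFDerivAt_fst
  have hY1 : HasFDerivAt (fun p : ℝ×ℝ×ℝ×ℝ => p.2.1)
      ((fst ℝ ℝ (ℝ×ℝ)).comp (snd ℝ ℝ (ℝ×ℝ×ℝ))) p :=
    hasFDerivAt_fst.comp p hasFDerivAt_snd
  have hX2 : HasFDerivAt (fun p : ℝ×ℝ×ℝ×ℝ => p.2.2.1)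
      ((fst ℝ ℝ ℝ).comp ((snd ℝ ℝ (ℝ×ℝ)).comp (snd ℝ ℝ (ℝ×ℝ×ℝ)))) p :=
    hasFDerivAt_fst.comp p (hasFDerivAt_snd.comp p hasFDerivAt_snd)
  have hY2 : HasFDerivAt (fun p : ℝ×ℝ×ℝ×ℝ => p.2.2.2)
      ((snd ℝ ℝ ℝ).comp ((snd ℝ ℝ (ℝ×ℝ)).comp (snd ℝ ℝ (ℝ×ℝ×ℝ)))) p :=
    hasFDerivAt_snd.comp p (hasFDerivAt_snd.comp p hasFDerivAt_snd)
  have hK1 : HasFDerivAt K1 _ p := (((hasDerivAt_pow 2 p.1).comp_hasFDerivAt p hX1).mul_const (2:ℝ)⁻¹).add (by have h := ((hasDerivAt_pow 2 p.2.2.1).comp_hasFDerivAt p hX2).mul_const (2:ℝ)⁻¹; exact h)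
  have hK2 : HasFDerivAt K2 _ p :=
    (((hX1.mul hY1).neg).mul_const (2:ℝ)⁻¹).add (((hX2.mul hY2).neg).mul_const (2:ℝ)⁻¹)
  have hp1 : p.1 ^ 2 ≠ 0 := pow_ne_zero 2 h1
  have hp3 : p.2.2.1 ^ 2 ≠ 0 := pow_ne_zero 2 h3
  have hK3 : HasFDerivAt (K3 c) _ p :=
    ((((hasDerivAt_pow 2 p.2.1).comp_hasFDerivAt p hY1).add (((hasDerivAt_const p.1 c).div (hasDerivAt_pow 2 p.1) hp1).comp_hasFDerivAt p hX1)).const_mul (1/2)).add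
      ((((hasDerivAt_pow 2 p.2.2.2).comp_hasFDerivAt p hY2).add (((hasDerivAt_const p.2.2.1 c).div (hasDerivAt_pow 2 p.2.2.1) hp3).comp_hasFDerivAt p hX2)).const_mul (1/2))
  have hF : HasFDerivAt (F5 c) _ p := (hK1.mul hK3).sub ((hasDerivAt_pow 2 (K2 p)).comp_hasFDerivAt p hK2)
  have Heval : ∀ v : ℝ×ℝ×ℝ×ℝ,
      fderiv ℝ K1 p v = p.1 * v.1 + p.2.2.1 * v.2.2.1 ∧
      fderiv ℝ K2 p v = -(p.1 * v.2.1 + p.2.1 * v.1) / 2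
          + -(p.2.2.1 * v.2.2.2 + p.2.2.2 * v.2.2.1) / 2 ∧
      fderiv ℝ (K3 c) p v = (1/2) * (2 * p.2.1 * v.2.1 - c * (2 * p.1 * v.1) / (p.1^2)^2)
          + (1/2) * (2 * p.2.2.2 * v.2.2.2 - c * (2 * p.2.2.1 * v.2.2.1) / (p.2.2.1^2)^2) := by
    intro v
    refine ⟨?_, ?_, ?_⟩
    · rw [hK1.fderiv]
      simp [ContinuousLinearMap.add_apply, ContinuousLinearMap.smul_apply,
        ContinuousLinearMap.comp_apply, ContinuousLinearMap.coe_fst',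
        ContinuousLinearMap.coe_snd', smul_eq_mul]
      ring
    · rw [hK2.fderiv]
      simp [ContinuousLinearMap.add_apply, ContinuousLinearMap.smul_apply,
        ContinuousLinearMap.comp_apply, ContinuousLinearMap.coe_fst',
        ContinuousLinearMap.coe_snd', ContinuousLinearMap.neg_apply, smul_eq_mul]
      ring
    · rw [hK3.fderiv]
      simp [ContinuousLinearMap.add_apply, ContinuousLinearMap.smul_apply,
        ContinuousLinearMap.comp_apply, ContinuousLinearMap.coe_fst',
        ContinuousLinearMap.coe_snd', ContinuousLinearMap.sub_apply,
        ContinuousLinearMap.zero_apply, ContinuousLinearMap.smulRight_apply,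
        ContinuousLinearMap.one_apply, smul_eq_mul]
      ring
  have HevalF : ∀ v : ℝ×ℝ×ℝ×ℝ, fderiv ℝ (F5 c) p v
      = K1 p * fderiv ℝ (K3 c) p v + K3 c p * fderiv ℝ K1 p v
        - 2 * K2 p * fderiv ℝ K2 p v := by
    intro v
    rw [hF.fderiv, hK1.fderiv, hK2.fderiv, hK3.fderiv]
    simp [ContinuousLinearMap.add_apply, ContinuousLinearMap.smul_apply,
      ContinuousLinearMap.sub_apply, smul_eq_mul]
    ring
  refine ⟨?_, ?_, ?_, ?_⟩
  · simp only [F5, K1, K2, K3]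
    field_simp
    ring
  all_goals
    simp only [pb4, HevalF, (Heval _).1, (Heval _).2.1, (Heval _).2.2, K1, K2, K3]
    norm_num
    field_simp
    ring
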